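/- arXiv:1209.2976 — 8 statements merged into one kernel-verified Lean document; each statement's English description precedes it below -/
import Mathlib

section
/- The quartic form f = x0^4 + x0*x1^3 + x1^4 - 3*x0^2*x1*x2 - 4*x0*x1^2*x2 + 2*x0^2*x2^2 + x0*x2^3 + x1*x2^3 + x2^4 is a sum of two squares of polynomials with real coefficients. -/
open MvPolynomial

theorem stmt_1 :
    ∃ p q : MvPolynomial (Fin 3) ℝ,
      (X 0 ^ 4 + X 0 * X 1 ^ 3 + X 1 ^ 4 - 3 * X 0 ^ 2 * X 1 * X 2
        - 4 * X 0 * X 1 ^ 2 * X 2 + 2 * X 0 ^ 2 * X 2 ^ 2 + X 0 * X 2 ^ 3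
        + X 1 * X 2 ^ 3 + X 2 ^ 4 : MvPolynomial (Fin 3) ℝ)
        = p ^ 2 + q ^ 2 := by
  -- obtain a real root s of s^6 - 4 s^4 + 1 = 0
  obtain ⟨s, -, hs⟩ : ∃ s ∈ Set.Icc (0:ℝ) 1, s^6 - 4*s^4 + 1 = 0 := by
    have hcont : ContinuousOn (fun x : ℝ => x^6 - 4*x^4 + 1) (Set.Icc 0 1) := by
      fun_prop
    have h := intermediate_value_Icc' (by norm_num : (0:ℝ) ≤ 1) hcont
    have h0 : (0:ℝ) ∈ Set.Icc ((fun x : ℝ => x^6 - 4*x^4 + 1) 1)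
        ((fun x : ℝ => x^6 - 4*x^4 + 1) 0) := by norm_num
    obtain ⟨s, hmem, hval⟩ := h h0
    exact ⟨s, hmem, hval⟩
  refine ⟨X 0 ^ 2 + C ((s^4 - 4*s^2)/2) * X 1 ^ 2 - C (1/2) * (X 1 * X 2)
      + C (1 - s^2/2) * X 2 ^ 2,
    C (4*s^3 - s^5) * (X 0 * X 1) - C s * (X 0 * X 2) + C (s/2) * X 1 ^ 2
      + C ((s^3 - 4*s)/2) * (X 1 * X 2) + C ((s^5 - 4*s^3)/2) * X 2 ^ 2, ?_⟩
  apply MvPolynomial.funext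
  intro x
  simp only [map_add, map_sub, map_mul, map_pow, map_ofNat, eval_X, eval_C]
  set a := x 0
  set b := x 1
  set c := x 2
  linear_combination (-(-2*b*c^3 + (1/4)*b^2*c^2 - b^4 - a*c^3 + 4*a*b^2*c - a*b^3
      + 2*a^2*b*c
      + s^2*(-c^4 + (1/2)*b*c^3 + (1/4)*b^4 + 4*a*b*c^2 - a*b^2*c - 4*a^2*b^2)
      + s^4*((1/4)*c^4 - a*b*c^2 + a^2*b^2))) * hs
end

section
/- The polynomial f = x0^4 + x0*x1^3 + x1^4 - 3*x0^2*x1*x2 - 4*x0*x1^2*x2 + 2*x0^2*x2^2 + x0*x2^3 + x1*x2^3 + x2^4, viewed as a function on ℝ^3, is nonnegative everywhere. -/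
set_option maxHeartbeats 1000000 in
theorem stmt_2 (a b c : ℝ) :
    0 ≤ a ^ 4 + a * b ^ 3 + b ^ 4 - 3 * a ^ 2 * b * c - 4 * a * b ^ 2 * c
      + 2 * a ^ 2 * c ^ 2 + a * c ^ 3 + b * c ^ 3 + c ^ 4 := by
  obtain hs | hs := (by positivity : (0:ℝ) ≤ a ^ 2 + b ^ 2 + c ^ 2).eq_or_lt
  · have ha : a = 0 := by
      have h2 : a ^ 2 = 0 := by nlinarith [sq_nonneg b, sq_nonneg c]
      exact pow_eq_zero_iff two_ne_zero |>.mp h2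
    have hb : b = 0 := by
      have h2 : b ^ 2 = 0 := by nlinarith [sq_nonneg a, sq_nonneg c]
      exact pow_eq_zero_iff two_ne_zero |>.mp h2
    have hc : c = 0 := by
      have h2 : c ^ 2 = 0 := by nlinarith [sq_nonneg a, sq_nonneg b]
      exact pow_eq_zero_iff two_ne_zero |>.mp h2
    subst ha; subst hb; subst hc; norm_num
  · have key : (a ^ 2 + b ^ 2 + c ^ 2) *
        (a ^ 4 + a * b ^ 3 + b ^ 4 - 3 * a ^ 2 * b * c - 4 * a * b ^ 2 * c
          + 2 * a ^ 2 * c ^ 2 + a * c ^ 3 + b * c ^ 3 + c ^ 4)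
        = (1/5) * (-a^3 + a^2*c - a*b^2 - a*c^2 + 5*a*b*c + b^2*c - 2*b^3 - c^3)^2
        + (1/80) * (2*a^3 - 5*a^2*b + 8*a^2*c - 8*a*b^2 + 7*a*c^2 - b^3 - 2*b^2*c + 5*b*c^2 + 7*c^3)^2
        + (1/176) * (2*a^3 + 11*a^2*b - b^3 - 2*b^2*c - 9*a*c^2 - 11*b*c^2 - c^3)^2
        + (2/11) * (2*a^3 + 2*a*c^2 - 2*b^2*c - b^3 - c^3)^2 := by ring
    have hnn : 0 ≤ (a ^ 2 + b ^ 2 + c ^ 2) *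
        (a ^ 4 + a * b ^ 3 + b ^ 4 - 3 * a ^ 2 * b * c - 4 * a * b ^ 2 * c
          + 2 * a ^ 2 * c ^ 2 + a * c ^ 3 + b * c ^ 3 + c ^ 4) := by
      rw [key]; positivity
    exact nonneg_of_mul_nonneg_right hnn hs
end

section
/- If β is a real root of t^3 - 4t - 1 = 0, then 4f = (2x0^2 + β x1^2 - x1 x2 + (2 + 1/β) x2^2)^2 - β (2 x0 x1 - x1^2/β + 2 x0 x2/β + β x1 x2 - x2^2)^2, where f = x0^4 + x0 x1^3 + x1^4 - 3 x0^2 x1 x2 - 4 x0 x1^2 x2 + 2 x0^2 x2^2 + x0 x2^3 + x1 x2^3 + x2^4. -/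
open MvPolynomial

theorem stmt_3 (β : ℝ) (hβ : β ^ 3 - 4 * β - 1 = 0) :
    (4 : MvPolynomial (Fin 3) ℝ) *
      (X 0 ^ 4 + X 0 * X 1 ^ 3 + X 1 ^ 4 - 3 * X 0 ^ 2 * X 1 * X 2
        - 4 * X 0 * X 1 ^ 2 * X 2 + 2 * X 0 ^ 2 * X 2 ^ 2 + X 0 * X 2 ^ 3
        + X 1 * X 2 ^ 3 + X 2 ^ 4)
    = (2 * X 0 ^ 2 + C β * X 1 ^ 2 - X 1 * X 2 + C (2 + 1 / β) * X 2 ^ 2) ^ 2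
      - C β * (2 * X 0 * X 1 - C (1 / β) * X 1 ^ 2 + C (2 / β) * (X 0 * X 2)
        + C β * X 1 * X 2 - X 2 ^ 2) ^ 2 := by
  have hb0 : β ≠ 0 := by
    intro h; rw [h] at hβ; norm_num at hβ
  have hinv : 1 / β = β ^ 2 - 4 := by
    field_simp
    linear_combination -hβ
  have hinv2 : 2 / β = 2 * (β ^ 2 - 4) := by
    rw [div_eq_iff hb0] at hinv ⊢
    linear_combination 2 * hinv
  have h21 : 2 + 1 / β = β ^ 2 - 2 := by rw [hinv]; ring
  rw [h21, hinv, hinv2]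
  have hb : (C β : MvPolynomial (Fin 3) ℝ) ^ 3 - 4 * C β - 1 = 0 := by
    have := congrArg (C : ℝ →+* MvPolynomial (Fin 3) ℝ) hβ
    have h4 : (C 4 : MvPolynomial (Fin 3) ℝ) = 4 := map_ofNat C 4
    simpa [h4] using this
  simp only [map_sub, map_mul, map_pow, map_ofNat, map_add]
  set b : MvPolynomial (Fin 3) ℝ := C β with hbdef
  linear_combination (X 1 ^ 2 * X 2 ^ 2 - 4 * X 1 ^ 4 - 4 * X 0 * X 2 ^ 3
      + 16 * X 0 * X 1 ^ 2 * X 2 - 4 * X 0 * X 1 ^ 3 - 16 * X 0 ^ 2 * X 2 ^ 2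
      + 8 * X 0 ^ 2 * X 1 * X 2
      + b * (- X 2 ^ 4 - 2 * X 1 ^ 3 * X 2 + 4 * X 0 * X 1 * X 2 ^ 2)
      + b ^ 2 * (X 1 ^ 4 - 4 * X 0 * X 1 ^ 2 * X 2 + 4 * X 0 ^ 2 * X 2 ^ 2)) * hb
end

section
/- Let K/k be a finite extension of fields with k formally real, and assume the trace form of K/k is positive definite with respect to every ordering of k. Then there exist sums of squares c_1,...,c_d in k with c_1 = 1 such that for every commutative k-algebra A and every f ∈ A that is a sum of m squares in A ⊗_k K, there exist f_1,...,f_d ∈ A, each a sum of m squares in A, with f = Σ_{i=1}^d c_i f_i. -/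
open scoped TensorProduct

/-- An ordering of a field `k`: a positive cone `P` with `P + P ⊆ P`, `P · P ⊆ P`,
`P ∪ -P = k` and `P ∩ -P = {0}`. -/
structure FieldOrdering (k : Type*) [Field k] where
  carrier : Set k
  add_mem : ∀ a b : k, a ∈ carrier → b ∈ carrier → a + b ∈ carrier
  mul_mem : ∀ a b : k, a ∈ carrier → b ∈ carrier → a * b ∈ carrier
  total : ∀ a : k, a ∈ carrier ∨ -a ∈ carrier
  eq_zero : ∀ a : k, a ∈ carrier → -a ∈ carrier → a = 0

universe u v w


section Cones

variable {k : Type*} [Field k]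

/-- A precone: contains all squares, closed under `+` and `*`, omits `-1`. -/
def IsCone (S : Set k) : Prop :=
  (∀ x : k, x ^ 2 ∈ S) ∧ (∀ a ∈ S, ∀ b ∈ S, a + b ∈ S) ∧
    (∀ a ∈ S, ∀ b ∈ S, a * b ∈ S) ∧ (-1 : k) ∉ S

theorem exists_maximal_cone {S₀ : Set k} (h : IsCone S₀) :
    ∃ P, IsCone P ∧ S₀ ⊆ P ∧ ∀ T, IsCone T → P ⊆ T → T = P := by
  obtain ⟨P, hP⟩ := zorn_subset_nonempty {T : Set k | IsCone T ∧ S₀ ⊆ T}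
    (fun c hc hchain hne => by
      refine ⟨⋃₀ c, ⟨⟨?_, ?_, ?_, ?_⟩, ?_⟩, fun T hT => Set.subset_sUnion_of_mem hT⟩
      · obtain ⟨T, hT⟩ := hne
        exact fun x => Set.mem_sUnion.2 ⟨T, hT, (hc hT).1.1 x⟩
      · rintro a ⟨T₁, h₁, ha⟩ b ⟨T₂, h₂, hb⟩
        rcases hchain.total h₁ h₂ with h | h
        · exact ⟨T₂, h₂, (hc h₂).1.2.1 a (h ha) b hb⟩
        · exact ⟨T₁, h₁, (hc h₁).1.2.1 a ha b (h hb)⟩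
      · rintro a ⟨T₁, h₁, ha⟩ b ⟨T₂, h₂, hb⟩
        rcases hchain.total h₁ h₂ with h | h
        · exact ⟨T₂, h₂, (hc h₂).1.2.2.1 a (h ha) b hb⟩
        · exact ⟨T₁, h₁, (hc h₁).1.2.2.1 a ha b (h hb)⟩
      · rintro ⟨T, hT, hm⟩
        exact (hc hT).1.2.2.2 hm
      · obtain ⟨T, hT⟩ := hne
        exact (hc hT).2.trans (Set.subset_sUnion_of_mem hT))
    S₀ ⟨h, subset_rfl⟩
  exact ⟨P, hP.2.1.1, hP.1, fun T hT hPT =>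
    (hP.2.2 ⟨hT, hP.1.trans hPT⟩ hPT).antisymm hPT⟩

/-- A maximal cone is a field ordering. -/
theorem maximal_cone_ordering {P : Set k} (hP : IsCone P)
    (hmax : ∀ T, IsCone T → P ⊆ T → T = P) :
    (∀ a : k, a ∈ P ∨ -a ∈ P) ∧ (∀ a : k, a ∈ P → -a ∈ P → a = 0) := by
  obtain ⟨hsq, hadd, hmul, hm1⟩ := hP
  have h0 : (0 : k) ∈ P := by simpa using hsq 0
  have h1 : (1 : k) ∈ P := by simpa using hsq 1
  constructor
  · intro a
    by_contra hcon
    push_neg at hcon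
    -- extension of P by an element b
    set ext : k → Set k := fun b => {x | ∃ p ∈ P, ∃ q ∈ P, x = p + q * b} with hext
    have hextP : ∀ b, P ⊆ ext b := fun b x hx => ⟨x, hx, 0, h0, by ring⟩
    have hextb : ∀ b, b ∈ ext b := fun b => ⟨0, h0, 1, h1, by ring⟩
    have hcone : ∀ b : k, (-1 : k) ∉ ext b → IsCone (ext b) := by
      intro b hb
      refine ⟨fun x => hextP b (hsq x), ?_, ?_, hb⟩
      · rintro x ⟨p, hp, q, hq, rfl⟩ y ⟨p', hp', q', hq', rfl⟩
        exact ⟨p + p', hadd _ hp _ hp', q + q', hadd _ hq _ hq', by ring⟩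
      · rintro x ⟨p, hp, q, hq, rfl⟩ y ⟨p', hp', q', hq', rfl⟩
        refine ⟨p * p' + (q * q') * b ^ 2, hadd _ (hmul _ hp _ hp') _
          (hmul _ (hmul _ hq _ hq') _ (hsq b)), p * q' + q * p',
          hadd _ (hmul _ hp _ hq') _ (hmul _ hq _ hp'), by ring⟩
    -- one of ext a, ext (-a) misses -1
    have key : (-1 : k) ∉ ext a ∨ (-1 : k) ∉ ext (-a) := by
      by_contra hk
      push_neg at hk
      obtain ⟨⟨p, hp, q, hq, e1⟩, ⟨p', hp', q', hq', e2⟩⟩ := hk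
      apply hm1
      have : (-1 : k) = p + p' + p * p' + (q * q') * a ^ 2 := by
        linear_combination (1 + p') * e1 - (q * a) * e2
      rw [this]
      exact hadd _ (hadd _ (hadd _ hp _ hp') _ (hmul _ hp _ hp')) _
        (hmul _ (hmul _ hq _ hq') _ (hsq a))
    rcases key with hk | hk
    · exact hcon.1 (by rw [← hmax _ (hcone a hk) (hextP a)]; exact hextb a)
    · exact hcon.2 (by rw [← hmax _ (hcone (-a) hk) (hextP (-a))]; exact hextb (-a))
  · intro a ha hna
    by_contra h0a
    apply hm1
    have : (-1 : k) = a * (-a) * (a⁻¹) ^ 2 := by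
      field_simp
    rw [this]
    exact hmul _ (hmul _ ha _ hna) _ (hsq a⁻¹)

end Cones
section Artin

variable {k : Type*} [Field k]

theorem isSumSq_mul {R : Type*} [CommRing R] {s t : R} (hs : IsSumSq s) (ht : IsSumSq t) :
    IsSumSq (s * t) := by
  induction hs with
  | zero => simpa using IsSumSq.zero
  | @sq_add a S pS ih =>
    rw [add_mul]
    refine IsSumSq.add ?_ ih
    clear ih pS
    induction ht with
    | zero => simpa using IsSumSq.zero
    | @sq_add b T pT ih =>
      have : a * a * (b * b + T) = (a * b) * (a * b) + a * a * T := by ring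
      rw [this]
      exact IsSumSq.sq_add _ ih

theorem FieldOrdering.mul_self_mem (P : FieldOrdering k) (a : k) : a * a ∈ P.carrier := by
  rcases P.total a with h | h
  · exact P.mul_mem a a h h
  · simpa using P.mul_mem _ _ h h

theorem FieldOrdering.mem_of_isSumSq (P : FieldOrdering k) {a : k} (h : IsSumSq a) :
    a ∈ P.carrier := by
  induction h with
  | zero => simpa using P.mul_self_mem 0
  | @sq_add a S _ ih => exact P.add_mem _ _ (P.mul_self_mem a) ih

theorem cone_of_ssq (hreal : ¬ IsSumSq (-1 : k)) : IsCone {x : k | IsSumSq x} :=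
  ⟨fun x => by rw [sq]; simpa using IsSumSq.sq_add x 0 IsSumSq.zero,
   fun a ha b hb => ha.add hb, fun a ha b hb => isSumSq_mul ha hb, hreal⟩

/-- Build a field ordering from a cone. -/
theorem exists_fieldOrdering_ge {S₀ : Set k} (h : IsCone S₀) :
    ∃ P : FieldOrdering k, S₀ ⊆ P.carrier := by
  obtain ⟨P, hP, hsub, hmax⟩ := exists_maximal_cone h
  have h2 := maximal_cone_ordering hP hmax
  exact ⟨⟨P, fun a b ha hb => hP.2.1 a ha b hb, fun a b ha hb => hP.2.2.1 a ha b hb,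
    h2.1, h2.2⟩, hsub⟩

theorem exists_fieldOrdering (hreal : ¬ IsSumSq (-1 : k)) : Nonempty (FieldOrdering k) :=
  (exists_fieldOrdering_ge (cone_of_ssq hreal)).elim fun P _ => ⟨P⟩

/-- Artin: an element positive in every ordering is a sum of squares. -/
theorem isSumSq_of_forall_mem (hreal : ¬ IsSumSq (-1 : k)) {a : k}
    (h : ∀ P : FieldOrdering k, a ∈ P.carrier) (ha : a ≠ 0) : IsSumSq a := by
  by_contra hcon
  have hcone : IsCone {x : k | ∃ s t : k, IsSumSq s ∧ IsSumSq t ∧ x = s - t * a} := by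
    refine ⟨fun x => ⟨x ^ 2, 0, by rw [sq]; simpa using IsSumSq.sq_add x 0 IsSumSq.zero,
        IsSumSq.zero, by ring⟩, ?_, ?_, ?_⟩
    · rintro x ⟨s, t, hs, ht, rfl⟩ y ⟨s', t', hs', ht', rfl⟩
      exact ⟨s + s', t + t', hs.add hs', ht.add ht', by ring⟩
    · rintro x ⟨s, t, hs, ht, rfl⟩ y ⟨s', t', hs', ht', rfl⟩
      exact ⟨s * s' + (t * t') * a ^ 2, s * t' + t * s',
        (isSumSq_mul hs hs').add (isSumSq_mul (isSumSq_mul ht ht')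
          (by rw [sq]; simpa using IsSumSq.sq_add a 0 IsSumSq.zero)),
        (isSumSq_mul hs ht').add (isSumSq_mul ht hs'), by ring⟩
    · rintro ⟨s, t, hs, ht, he⟩
      have ht0 : t ≠ 0 := by
        rintro rfl
        refine hreal ?_
        rw [he]
        simpa using hs
      apply hcon
      have h2 : t * a = 1 + s := by linear_combination he
      have : a = (1 + s) * t * (t⁻¹) ^ 2 := by
        rw [← h2]
        field_simp
      rw [this]
      exact isSumSq_mul (isSumSq_mul (by simpa using IsSumSq.sq_add 1 hs) ht)
        (by rw [sq]; simpa using IsSumSq.sq_add t⁻¹ 0 IsSumSq.zero)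
  obtain ⟨P, hsub⟩ := exists_fieldOrdering_ge hcone
  have hna : -a ∈ P.carrier := hsub ⟨0, 1, IsSumSq.zero, by simpa using IsSumSq.sq_add (1:k) 0 IsSumSq.zero, by ring⟩
  exact ha (P.eq_zero a (h P) hna)

end Artin

section OrthoBasis

open Module

variable {k : Type*} {K : Type*} [Field k] [AddCommGroup K] [Module k K]
  [FiniteDimensional k K]

/-- Orthogonal basis whose first vector is a prescribed non-isotropic vector. -/
theorem exists_orthoBasis_first [Invertible (2 : k)] (B : LinearMap.BilinForm k K)
    (hsymm : B.IsSymm) (x : K) (hx : ¬ B.IsOrtho x x) {n : ℕ}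
    (hn : n + 1 = Module.finrank k K) :
    ∃ v : Basis (Fin (n + 1)) k K, B.IsOrthoᵢ v ∧ v 0 = x := by
  have hcompl := LinearMap.isCompl_span_singleton_orthogonal (B := B) hx
  set W := (Submodule.span k {x}).orthogonalBilin B with hW
  have hdim : finrank k (Submodule.span k {x}) + finrank k W = finrank k K :=
    Submodule.finrank_add_eq_of_isCompl hcompl
  rw [finrank_span_singleton (ne_zero_of_map hx)] at hdim
  have hWn : finrank k W = n := by omega
  let B' := B.domRestrict₁₂ W W
  obtain ⟨v'', hv₁⟩ := LinearMap.BilinForm.exists_orthogonal_basis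
      (⟨fun x y => hsymm.eq x y⟩ : B'.IsSymm)
  let v' : Basis (Fin n) k W := v''.reindex (finCongr hWn)
  have hmemW : ∀ i, (v' i : K) ∈ W := fun i => (v' i).2
  have hBW : ∀ y : K, y ∈ W → B x y = 0 := by
    intro y hy
    exact hy x (Submodule.mem_span_singleton_self x)
  have horth' : ∀ i j : Fin n, i ≠ j → B (v' i : K) (v' j : K) = 0 := by
    intro i j hij
    have := hv₁ (i := (finCongr hWn).symm i) (j := (finCongr hWn).symm j)
      (fun h => hij ((finCongr hWn).symm.injective h))
    simpa [Function.onFun, LinearMap.IsOrtho, B', LinearMap.domRestrict₁₂_apply, v',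
      Basis.reindex_apply] using this
  obtain ⟨b, hb⟩ : ∃ b : Basis (Fin (n + 1)) k K, ⇑b = Fin.cons x (Subtype.val ∘ ⇑v') := by
    refine ⟨Basis.mkFinCons x v' ?_ ?_, by apply Basis.coe_mkFinCons⟩
    · rintro c y hy hc
      rw [add_eq_zero_iff_neg_eq] at hc
      rw [← hc, Submodule.neg_mem_iff] at hy
      have hdisj := hcompl.disjoint
      rw [Submodule.disjoint_def] at hdisj
      have := hdisj (c • x) (Submodule.smul_mem _ _ <| Submodule.mem_span_singleton_self _) hy
      exact (smul_eq_zero.1 this).resolve_right fun h => hx <| h.symm ▸ map_zero _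
    · intro y
      refine ⟨-B x y / B x x, fun z hz => ?_⟩
      obtain ⟨c, rfl⟩ := Submodule.mem_span_singleton.1 hz
      rw [map_smul, LinearMap.smul_apply, map_add, map_smul,
        smul_eq_mul, smul_eq_mul, div_mul_cancel₀ _ hx, add_neg_cancel, mul_zero]
  refine ⟨b, ?_, by rw [hb]; simp⟩
  intro i j
  refine Fin.cases ?_ (fun i' => ?_) i <;> refine Fin.cases ?_ (fun j' => ?_) j <;> intro hij <;>
    simp only [Function.onFun, hb, Fin.cons_zero, Fin.cons_succ, Function.comp_apply]
  · exact absurd rfl hij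
  · exact hBW _ (hmemW j')
  · show B _ _ = 0
    have h1 : B x (v' i' : K) = 0 := hBW _ (hmemW i')
    have h2 := hsymm.eq x (v' i' : K)
    simpa [h1] using h2.symm
  · exact horth' i' j' fun h => hij (congrArg Fin.succ h)

theorem natCast_isSumSq {k : Type*} [CommRing k] (n : ℕ) : IsSumSq ((n : k)) := by
  induction n with
  | zero => simpa using IsSumSq.zero
  | succ n ih =>
    push_cast
    have := IsSumSq.sq_add (1 : k) ih
    simpa [add_comm] using this

theorem charZero_of_not_isSumSq {k : Type*} [Field k] (hreal : ¬ IsSumSq (-1 : k)) :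
    CharZero k := by
  obtain ⟨p, hp⟩ := CharP.exists k
  rcases CharP.char_is_prime_or_zero k p with hprime | rfl
  · exfalso
    apply hreal
    have h1 : ((p : ℕ) : k) = 0 := CharP.cast_eq_zero k p
    have hp1 : 1 ≤ p := hprime.one_lt.le
    have : ((p - 1 : ℕ) : k) = -1 := by
      push_cast [Nat.cast_sub hp1]
      rw [h1]; ring
    rw [← this]
    exact natCast_isSumSq _
  · exact CharP.charP_to_charZero k



theorem stmt_5 (k : Type u) (K : Type v) [Field k] [Field K] [Algebra k K]
    [FiniteDimensional k K]
    (hreal : ¬ IsSumSq (-1 : k))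
    (d : ℕ) (hd : d = Module.finrank k K) (hdpos : 0 < d)
    -- the trace form of `K/k` is positive definite with respect to every ordering of `k`
    (hpd : ∀ P : FieldOrdering k, ∀ y : K, y ≠ 0 →
      Algebra.trace k K (y ^ 2) ∈ P.carrier ∧ Algebra.trace k K (y ^ 2) ≠ 0) :
    ∃ c : Fin d → k, (∀ i, IsSumSq (c i)) ∧ c ⟨0, hdpos⟩ = 1 ∧
      ∀ (A : Type w) [CommRing A] [Algebra k A], ∀ (m : ℕ) (f : A),
        (∃ g : Fin m → A ⊗[k] K, (f ⊗ₜ[k] (1 : K)) = ∑ j, (g j) ^ 2) →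
        ∃ F : Fin d → A, (∀ i, ∃ b : Fin m → A, F i = ∑ j, (b j) ^ 2) ∧
          f = ∑ i, algebraMap k A (c i) * F i := by
  haveI : CharZero k := charZero_of_not_isSumSq hreal
  haveI : Invertible (2 : k) := invertibleOfNonzero two_ne_zero
  obtain ⟨P₀⟩ := exists_fieldOrdering hreal
  obtain ⟨n, rfl⟩ : ∃ n, d = n + 1 := ⟨d - 1, by omega⟩
  set D : k := (Module.finrank k K : k) with hDdef
  have hD0 : D ≠ 0 := Nat.cast_ne_zero.2 (by omega)
  have htr1 : Algebra.trace k K (1 : K) = D := by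
    rw [show (1 : K) = algebraMap k K 1 by simp, Algebra.trace_algebraMap]
    simp [hDdef]
  have hone : ¬ (Algebra.traceForm k K).IsOrtho (1 : K) (1 : K) := by
    intro h
    apply hD0
    have h2 : (Algebra.traceForm k K) 1 1 = 0 := h
    rwa [Algebra.traceForm_apply, mul_one, htr1] at h2
  obtain ⟨v, hOrtho, hv0⟩ := exists_orthoBasis_first (Algebra.traceForm k K)
    (Algebra.traceForm_isSymm (R := k) (S := K)) 1 hone hd
  have htrv : ∀ i j : Fin (n + 1), i ≠ j → Algebra.trace k K (v i * v j) = 0 := by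
    intro i j hij
    have := hOrtho hij
    simpa [Function.onFun, LinearMap.IsOrtho, Algebra.traceForm_apply] using this
  refine ⟨fun i => Algebra.trace k K (v i ^ 2) * D⁻¹, ?_, ?_, ?_⟩
  · intro i
    apply isSumSq_of_forall_mem hreal
    · intro P
      have h1 : Algebra.trace k K (v i ^ 2) ∈ P.carrier := (hpd P (v i) (v.ne_zero i)).1
      have h2 : D ∈ P.carrier := P.mem_of_isSumSq (natCast_isSumSq _)
      have he : Algebra.trace k K (v i ^ 2) * D⁻¹
          = Algebra.trace k K (v i ^ 2) * D * (D⁻¹ * D⁻¹) := by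
        field_simp
      show Algebra.trace k K (v i ^ 2) * D⁻¹ ∈ P.carrier
      rw [he]
      exact P.mul_mem _ _ (P.mul_mem _ _ h1 h2) (P.mul_self_mem _)
    · exact mul_ne_zero (hpd P₀ (v i) (v.ne_zero i)).2 (inv_ne_zero hD0)
  · show Algebra.trace k K (v (⟨0, hdpos⟩ : Fin (n + 1)) ^ 2) * D⁻¹ = 1
    have h0 : (⟨0, hdpos⟩ : Fin (n + 1)) = 0 := rfl
    rw [h0, hv0, one_pow, htr1]
    field_simp
  · intro A _ _ m f hf
    obtain ⟨g, heq⟩ := hf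
    let w : Basis (Fin (n + 1)) A (A ⊗[k] K) := v.baseChange A
    let b : Fin m → Fin (n + 1) → A := fun j i => w.repr (g j) i
    refine ⟨fun i => ∑ j, (b j i) ^ 2, fun i => ⟨fun j => b j i, rfl⟩, ?_⟩
    -- the A-linear "trace" map
    let T : A ⊗[k] K →ₗ[A] A :=
      (TensorProduct.AlgebraTensorModule.rid k A A).toLinearMap ∘ₗ
        (Algebra.trace k K).baseChange A
    have hT : ∀ (u : A) (y : K), T (u ⊗ₜ[k] y) = Algebra.trace k K y • u := by
      intro u y
      simp [T, LinearMap.baseChange_tmul, TensorProduct.AlgebraTensorModule.rid_tmul]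
    have hg : ∀ j, g j = ∑ i, b j i • ((1 : A) ⊗ₜ[k] v i) := by
      intro j
      conv_lhs => rw [← Basis.sum_repr w (g j)]
      refine Finset.sum_congr rfl fun i _ => ?_
      rw [show ((1 : A) ⊗ₜ[k] v i) = w i from (Basis.baseChange_apply A v i).symm]
    -- T applied to a square
    have hTsq : ∀ j, T (g j ^ 2) = ∑ i, Algebra.trace k K (v i ^ 2) • (b j i) ^ 2 := by
      intro j
      rw [sq, hg j, Finset.sum_mul_sum]
      rw [map_sum]
      have : ∀ i : Fin (n + 1),
          T (∑ i' : Fin (n + 1), (b j i • ((1:A) ⊗ₜ[k] v i)) * (b j i' • ((1:A) ⊗ₜ[k] v i')))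
            = Algebra.trace k K (v i ^ 2) • (b j i) ^ 2 := by
        intro i
        rw [map_sum]
        rw [Finset.sum_eq_single i]
        · rw [smul_mul_smul_comm, Algebra.TensorProduct.tmul_mul_tmul, one_mul,
            map_smul, hT, ← sq, ← sq, smul_comm, smul_eq_mul, mul_one]
        · intro i' _ hne
          rw [smul_mul_smul_comm, Algebra.TensorProduct.tmul_mul_tmul, one_mul,
            map_smul, hT, htrv i i' (Ne.symm hne)]
          simp
        · intro h
          exact absurd (Finset.mem_univ i) h
      exact Finset.sum_congr rfl fun i _ => this i
    -- T applied to f ⊗ 1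
    have hTf : T (f ⊗ₜ[k] (1 : K)) = D • f := by
      rw [hT, htr1]
    have key : D • f = ∑ i, Algebra.trace k K (v i ^ 2) • (∑ j, (b j i) ^ 2) := by
      rw [← hTf, heq, map_sum]
      rw [Finset.sum_congr rfl fun j _ => hTsq j]
      rw [Finset.sum_comm]
      exact Finset.sum_congr rfl fun i _ => (Finset.smul_sum).symm
    -- divide by D
    have hfin : f = D⁻¹ • (D • f) := by
      rw [smul_smul, inv_mul_cancel₀ hD0, one_smul]
    rw [hfin, key, Finset.smul_sum]
    refine Finset.sum_congr rfl fun i _ => ?_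
    rw [smul_smul, Algebra.smul_def]
    ring_nf
end OrthoBasis
end

section
/- In the field K = ℚ(α) with α^4 = α - 1, the identity (α^2 + α - 1)^2 + (α^2 - α)^2 + 1 = 0 holds; in particular, -1 is a sum of two squares in K. -/
open Polynomial

theorem stmt_12 :
    (AdjoinRoot.root (X ^ 4 - X + 1 : ℚ[X]) ^ 2 + AdjoinRoot.root (X ^ 4 - X + 1 : ℚ[X]) - 1) ^ 2
      + (AdjoinRoot.root (X ^ 4 - X + 1 : ℚ[X]) ^ 2 - AdjoinRoot.root (X ^ 4 - X + 1 : ℚ[X])) ^ 2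
      + 1 = 0 ∧
    ∃ a b : AdjoinRoot (X ^ 4 - X + 1 : ℚ[X]), a ^ 2 + b ^ 2 = -1 := by
  have h := AdjoinRoot.isRoot_root (X ^ 4 - X + 1 : ℚ[X])
  simp [Polynomial.IsRoot] at h
  set α := AdjoinRoot.root (X ^ 4 - X + 1 : ℚ[X]) with hα
  have key : (α ^ 2 + α - 1) ^ 2 + (α ^ 2 - α) ^ 2 + 1 = 0 := by
    linear_combination (2 : AdjoinRoot (X ^ 4 - X + 1 : ℚ[X])) * h
  exact ⟨key, ⟨α ^ 2 + α - 1, α ^ 2 - α, by linear_combination key⟩⟩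
end

section
/- For a sum of squares f ∈ ℝ[x_1,...,x_n], the characteristic set U_f = {p : ∃ ε > 0, f - ε p^2 is a sum of squares} is a linear subspace of ℝ[x_1,...,x_n]. -/
open MvPolynomial

private lemma smul_isSumSq {n : ℕ} (c : ℝ) (hc : 0 ≤ c) {s : MvPolynomial (Fin n) ℝ}
    (hs : IsSumSq s) : IsSumSq (c • s) := by
  induction hs with
  | zero => simpa using IsSumSq.zero
  | @sq_add a S pS ih =>
    have : c • (a * a + S) = (C (Real.sqrt c) * a) * (C (Real.sqrt c) * a) + c • S := by
      have : (C (Real.sqrt c) : MvPolynomial (Fin n) ℝ) * C (Real.sqrt c) = C c := by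
        rw [← C_mul, Real.mul_self_sqrt hc]
      rw [smul_add, mul_mul_mul_comm, this]
      ring_nf
      rw [smul_eq_C_mul]
      ring
    rw [this]
    exact IsSumSq.sq_add _ ih

theorem stmt_14 (n : ℕ) (f : MvPolynomial (Fin n) ℝ) (hf : IsSumSq f) :
    ∃ U : Submodule ℝ (MvPolynomial (Fin n) ℝ),
      (U : Set (MvPolynomial (Fin n) ℝ))
        = {p | ∃ ε : ℝ, 0 < ε ∧ IsSumSq (f - ε • p ^ 2)} := by
  refine ⟨⟨⟨⟨{p | ∃ ε : ℝ, 0 < ε ∧ IsSumSq (f - ε • p ^ 2)}, ?_⟩, ?_⟩, ?_⟩, rfl⟩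
  · -- add_mem
    rintro p q ⟨ε₁, hε₁, h₁⟩ ⟨ε₂, hε₂, h₂⟩
    obtain ⟨δ, hδ, hd1, hd2⟩ : ∃ δ : ℝ, 0 < δ ∧ 4 * δ ≤ ε₁ ∧ 4 * δ ≤ ε₂ :=
      ⟨min ε₁ ε₂ / 4, by positivity, by linarith [min_le_left ε₁ ε₂],
        by linarith [min_le_right ε₁ ε₂]⟩
    refine ⟨δ, hδ, ?_⟩
    have key : f - δ • (p + q) ^ 2
        = (1/2 : ℝ) • (f - ε₁ • p ^ 2) + (1/2 : ℝ) • (f - ε₂ • q ^ 2)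
          + ((ε₁/2 - 2*δ) • p ^ 2 + (ε₂/2 - 2*δ) • q ^ 2 + δ • (p - q) ^ 2) := by
      rw [smul_sub, smul_sub, smul_smul, smul_smul, add_sq, sub_sq]
      module
    rw [key]
    have h1 : (0:ℝ) ≤ ε₁/2 - 2*δ := by linarith
    have h2 : (0:ℝ) ≤ ε₂/2 - 2*δ := by linarith
    have sq1 : IsSumSq ((p : MvPolynomial (Fin n) ℝ) ^ 2) := by
      rw [sq]; simpa using IsSumSq.sq_add p IsSumSq.zero
    have sq2 : IsSumSq ((q : MvPolynomial (Fin n) ℝ) ^ 2) := by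
      rw [sq]; simpa using IsSumSq.sq_add q IsSumSq.zero
    have sq3 : IsSumSq (((p - q) : MvPolynomial (Fin n) ℝ) ^ 2) := by
      rw [sq]; simpa using IsSumSq.sq_add (p - q) IsSumSq.zero
    exact ((smul_isSumSq _ (by norm_num) h₁).add (smul_isSumSq _ (by norm_num) h₂)).add
      (((smul_isSumSq _ h1 sq1).add (smul_isSumSq _ h2 sq2)).add
        (smul_isSumSq _ hδ.le sq3))
  · -- zero_mem
    exact ⟨1, one_pos, by simpa using hf⟩
  · -- smul_mem
    rintro c p ⟨ε, hε, h⟩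
    rcases eq_or_ne c 0 with rfl | hc
    · exact ⟨1, one_pos, by simpa using hf⟩
    · refine ⟨ε / c ^ 2, by positivity, ?_⟩
      have : (ε / c ^ 2) • (c • p) ^ 2 = ε • p ^ 2 := by
        rw [smul_pow, smul_smul]
        congr 1
        field_simp
      rw [this]; exact h
end

section
/- For any sum of squares f ∈ ℝ[x_1,...,x_n], there exists a representation f = p_1^2 + ... + p_r^2 in which p_1,...,p_r form a linear basis of the characteristic subspace U_f = {p : ∃ ε > 0, f - ε p^2 is a sum of squares}. -/
open MvPolynomial
open Finset Matrix



section Aux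

variable {A : Type*}

lemma sos_exists_fin_rep [AddCommMonoid A] [Mul A] {x : A} (h : IsSumSq x) :
    ∃ (m : ℕ) (q : Fin m → A), x = ∑ i, q i * q i := by
  induction h with
  | zero => exact ⟨0, ![], by simp⟩
  | @sq_add a S pS ih =>
    obtain ⟨m, q, rfl⟩ := ih
    exact ⟨m + 1, Fin.cons a q, by simp [Fin.sum_univ_succ]⟩

lemma isSumSq_sum_sq [CommRing A] {ι : Type*} [Fintype ι] (q : ι → A) :
    IsSumSq (∑ i, q i ^ 2) := by
  simpa [sq] using isSumSq_sum_mul_self Finset.univ q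

lemma isSumSq_finset_sum [AddCommMonoid A] [Mul A] {ι : Type*} (s : Finset ι) (h : ι → A)
    (hh : ∀ i ∈ s, IsSumSq (h i)) : IsSumSq (∑ i ∈ s, h i) := by
  induction s using Finset.cons_induction with
  | empty => simpa using IsSumSq.zero
  | cons i s his ih =>
    rw [Finset.sum_cons]
    exact ((hh i (Finset.mem_cons_self i s))).add (ih fun j hj => hh j (Finset.mem_cons_of_mem hj))

lemma IsSumSq.real_smul [CommRing A] [Algebra ℝ A] {c : ℝ} (hc : 0 ≤ c) {x : A}
    (h : IsSumSq x) : IsSumSq (c • x) := by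
  induction h with
  | zero => simpa using IsSumSq.zero
  | @sq_add a S pS ih =>
    have : c • (a * a + S) = (Real.sqrt c • a) * (Real.sqrt c • a) + c • S := by
      rw [smul_mul_smul_comm, Real.mul_self_sqrt hc, smul_add]
    rw [this]
    exact IsSumSq.sq_add _ ih

lemma lagrange_identity [CommRing A] {ι : Type*} [Fintype ι] (a b : ι → A) :
    ∑ i, ∑ j, (a i * b j - a j * b i) ^ 2
      = 2 * ((∑ i, a i * a i) * (∑ i, b i * b i)) - 2 * ((∑ i, a i * b i) * (∑ i, a i * b i)) := by
  have h : ∀ i j : ι, (a i * b j - a j * b i) ^ 2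
      = a i * a i * (b j * b j) + b i * b i * (a j * a j) - 2 * (a i * b i) * (a j * b j) := by
    intro i j; ring
  calc ∑ i, ∑ j, (a i * b j - a j * b i) ^ 2
      = ∑ i, (a i * a i * (∑ j, b j * b j) + b i * b i * (∑ j, a j * a j)
          - 2 * (a i * b i) * (∑ j, a j * b j)) := by
        refine Finset.sum_congr rfl fun i _ => ?_
        simp_rw [h]
        rw [Finset.sum_sub_distrib, Finset.sum_add_distrib, ← Finset.mul_sum, ← Finset.mul_sum,
          ← Finset.mul_sum]
    _ = (∑ i, a i * a i) * (∑ j, b j * b j) + (∑ i, b i * b i) * (∑ j, a j * a j)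
          - (∑ i, 2 * (a i * b i)) * (∑ j, a j * b j) := by
        rw [Finset.sum_sub_distrib, Finset.sum_add_distrib, ← Finset.sum_mul, ← Finset.sum_mul,
          ← Finset.sum_mul]
    _ = _ := by rw [← Finset.mul_sum]; ring

lemma gram_expand [CommRing A] [Algebra ℝ A] {ι : Type*} [Fintype ι] {k : ℕ}
    (M : Matrix ι (Fin k) ℝ) (e : Fin k → A) :
    ∑ i, (∑ j, M i j • e j) ^ 2 = ∑ j, ∑ l, (Mᵀ * M) j l • (e j * e l) := by
  have h : ∀ i : ι, (∑ j, M i j • e j) ^ 2 = ∑ j, ∑ l, (M i j * M i l) • (e j * e l) := by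
    intro i
    rw [sq, Finset.sum_mul_sum]
    exact Finset.sum_congr rfl fun j _ => Finset.sum_congr rfl fun l _ => smul_mul_smul_comm _ _ _ _
  simp_rw [h]
  rw [Finset.sum_comm]
  refine Finset.sum_congr rfl fun j _ => ?_
  rw [Finset.sum_comm]
  refine Finset.sum_congr rfl fun l _ => ?_
  rw [← Finset.sum_smul]
  simp [Matrix.mul_apply]

end Aux

lemma homogeneousComponent_of_isHomogeneous {σ R : Type*} [CommSemiring R]
    {φ : MvPolynomial σ R} {d : ℕ} (h : φ.IsHomogeneous d) :
    homogeneousComponent d φ = φ := by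
  ext s
  rw [coeff_homogeneousComponent]
  split_ifs with hs
  · rfl
  · symm
    by_contra h0
    exact hs (by rw [Finsupp.degree_eq_weight_one (R := ℕ)]; exact h h0)

lemma sq_sum_eq_zero {n : ℕ} {ι : Type*} [Fintype ι] {g : ι → MvPolynomial (Fin n) ℝ}
    (h : ∑ j, g j ^ 2 = 0) (i : ι) : g i = 0 := by
  have hx : ∀ x : Fin n → ℝ, eval x (g i) = 0 := by
    intro x
    have h0 : ∑ j, (eval x (g j)) ^ 2 = 0 := by
      have := congrArg (eval x) h
      simpa using this
    have := (Finset.sum_eq_zero_iff_of_nonneg (fun j _ => sq_nonneg _)).mp h0 i (Finset.mem_univ i)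
    exact pow_eq_zero_iff (two_ne_zero) |>.mp this
  exact MvPolynomial.funext (by simpa using hx)

lemma totalDegree_rep_le {n : ℕ} {ι : Type*} [Fintype ι] (q : ι → MvPolynomial (Fin n) ℝ)
    (i : ι) : (q i).totalDegree ≤ (∑ j, q j ^ 2).totalDegree := by
  classical
  set d := Finset.univ.sup (fun j => (q j).totalDegree) with hd
  have hle : (q i).totalDegree ≤ d := by
    rw [hd]; exact Finset.le_sup (f := fun j => (q j).totalDegree) (Finset.mem_univ i)
  rcases Nat.eq_zero_or_pos d with h0 | hpos
  · exact le_trans (hle.trans h0.le) (Nat.zero_le _)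
  refine hle.trans ?_
  obtain ⟨j₀, -, hj₀⟩ := Finset.exists_mem_eq_sup Finset.univ ⟨i, Finset.mem_univ i⟩
    (fun j => (q j).totalDegree)
  set g : ι → MvPolynomial (Fin n) ℝ := fun j => homogeneousComponent d (q j) with hg
  -- each remainder has small degree
  have hrlt : ∀ j, q j - g j = 0 ∨ (q j - g j).totalDegree < d := by
    intro j
    rcases eq_or_ne (q j - g j) 0 with h | h
    · exact Or.inl h
    right
    have hdeg : (q j).totalDegree ≤ d := by
      rw [hd]; exact Finset.le_sup (f := fun j => (q j).totalDegree) (Finset.mem_univ j)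
    have hsupp : ∀ s ∈ (q j - g j).support, (s.sum fun _ e => e) < d := by
      intro s hs
      rw [mem_support_iff] at hs
      have hco : coeff s (q j - g j) = coeff s (q j) - coeff s (g j) := by
        simp [coeff_sub]
      by_contra hge
      push_neg at hge
      rcases eq_or_lt_of_le hge with heq | hlt
      · -- s.degree = d : coefficients agree
        have hdd : s.degree = d := heq.symm
        have : coeff s (g j) = coeff s (q j) := by
          rw [hg, coeff_homogeneousComponent, if_pos hdd]
        rw [hco, this, sub_self] at hs
        exact hs rfl
      · -- degree above total degree
        have h1 : coeff s (q j) = 0 :=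
          coeff_eq_zero_of_totalDegree_lt (lt_of_le_of_lt hdeg hlt)
        have h2 : coeff s (g j) = 0 := by
          rw [hg, coeff_homogeneousComponent, if_neg]
          intro hcon
          have : (s.sum fun _ e => e) = d := hcon
          omega
        rw [hco, h1, h2, sub_self] at hs
        exact hs rfl
    rw [totalDegree, Finset.sup_lt_iff (by exact_mod_cast hpos)]
    exact hsupp
  have hgdeg : ∀ j, (g j).totalDegree ≤ d := fun j =>
    (homogeneousComponent_isHomogeneous d (q j)).totalDegree_le
  have hcomp : ∀ j : ι, homogeneousComponent (d + d) (q j ^ 2) = g j ^ 2 := by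
    intro j
    have hsplit : q j ^ 2 = g j ^ 2 + (g j * (q j - g j) + (q j - g j) * g j
        + (q j - g j) * (q j - g j)) := by ring
    have h2 : homogeneousComponent (d + d) (g j ^ 2) = g j ^ 2 := by
      apply homogeneousComponent_of_isHomogeneous
      rw [sq]
      exact (homogeneousComponent_isHomogeneous d (q j)).mul
        (homogeneousComponent_isHomogeneous d (q j))
    have h3 : homogeneousComponent (d + d) (g j * (q j - g j) + (q j - g j) * g j
        + (q j - g j) * (q j - g j)) = 0 := by
      rcases hrlt j with h | h
      · rw [h]; simp
      apply homogeneousComponent_eq_zero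
      calc (g j * (q j - g j) + (q j - g j) * g j + (q j - g j) * (q j - g j)).totalDegree
          ≤ max (max ((g j * (q j - g j)).totalDegree) (((q j - g j) * g j).totalDegree))
            (((q j - g j) * (q j - g j)).totalDegree) :=
            le_trans (totalDegree_add _ _) (by
              exact max_le_max (totalDegree_add _ _) le_rfl)
        _ < d + d := by
            have b1 := totalDegree_mul (g j) (q j - g j)
            have b2 := totalDegree_mul (q j - g j) (g j)
            have b3 := totalDegree_mul (q j - g j) (q j - g j)
            have := hgdeg j
            simp only [max_lt_iff]
            omega
    rw [hsplit, map_add, h2, h3, add_zero]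
  have hfcomp : homogeneousComponent (d + d) (∑ j, q j ^ 2) = ∑ j, g j ^ 2 := by
    rw [map_sum]
    exact Finset.sum_congr rfl fun j _ => hcomp j
  -- g j₀ ≠ 0
  have hqj₀ : (q j₀).totalDegree = d := hj₀.symm
  have hqne : q j₀ ≠ 0 := by
    intro hcon
    rw [hcon, totalDegree_zero] at hqj₀
    omega
  have hgj₀ : g j₀ ≠ 0 := by
    obtain ⟨s, hs, hsd⟩ := Finset.exists_mem_eq_sup (q j₀).support
      (by rw [Finset.nonempty_iff_ne_empty, Ne, support_eq_empty]; exact hqne) (fun s => s.sum fun _ e => e)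
    intro hcon
    have hcs : coeff s (g j₀) = coeff s (q j₀) := by
      have hdd : s.degree = d := by
        show (s.sum fun _ e => e) = d
        rw [← hsd]; exact hqj₀
      rw [hg, coeff_homogeneousComponent, if_pos hdd]
    rw [hcon] at hcs
    exact (mem_support_iff.mp hs) hcs.symm
  have hsum_ne : (∑ j, g j ^ 2) ≠ 0 := fun hcon => hgj₀ (sq_sum_eq_zero hcon j₀)
  have : ¬ ((∑ j, q j ^ 2).totalDegree < d + d) := by
    intro hcon
    exact hsum_ne (hfcomp ▸ homogeneousComponent_eq_zero _ _ hcon)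
  omega

section Main

variable {n : ℕ}

local notation "P" => MvPolynomial (Fin n) ℝ

-- Claim 1 (Lagrange direction)
lemma span_sub_Uf {ι : Type*} [Fintype ι] {f : P} (hf : IsSumSq f) (p : ι → P)
    (hrep : f = ∑ i, p i ^ 2) {q : P} (hq : q ∈ Submodule.span ℝ (Set.range p)) :
    ∃ ε : ℝ, 0 < ε ∧ IsSumSq (f - ε • q ^ 2) := by
  classical
  rw [Submodule.mem_span_range_iff_exists_fun] at hq
  obtain ⟨c, hc⟩ := hq
  by_cases hS : ∑ i, c i * c i = 0
  · have hc0 : ∀ i, c i = 0 := by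
      intro i
      have := (Finset.sum_eq_zero_iff_of_nonneg (fun j _ => mul_self_nonneg (c j))).mp hS i
        (Finset.mem_univ i)
      exact mul_self_eq_zero.mp this
    have hq0 : q = 0 := by rw [← hc]; simp [hc0]
    exact ⟨1, one_pos, by simpa [hq0] using hf⟩
  · set S := ∑ i, c i * c i with hSdef
    have hSpos : 0 < S :=
      lt_of_le_of_ne (Finset.sum_nonneg fun j _ => mul_self_nonneg _) (Ne.symm hS)
    refine ⟨1/S, by positivity, ?_⟩
    have hCS : ∑ i, (C (c i) : P) * C (c i) = C S := by
      rw [hSdef, map_sum]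
      exact Finset.sum_congr rfl fun i _ => (map_mul C _ _).symm
    have hf' : ∑ i, p i * p i = f := by rw [hrep]; exact Finset.sum_congr rfl fun i _ => (sq _).symm
    have hq' : ∑ i, (C (c i) : P) * p i = q := by
      rw [← hc]; exact Finset.sum_congr rfl fun i _ => (smul_eq_C_mul _ _).symm
    have hlag := lagrange_identity (fun i => (C (c i) : P)) p
    rw [hCS, hf', hq'] at hlag
    have key : f - (1/S) • q ^ 2
        = (1/(2*S)) • ∑ i, ∑ j, ((C (c i) : P) * p j - C (c j) * p i) ^ 2 := by
      rw [hlag, smul_eq_C_mul, smul_eq_C_mul, sq]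
      have hβγ : (C (1/(2*S)) : P) * 2 * C S = 1 := by
        rw [show ((2:P)) = C (2:ℝ) from (map_ofNat C 2).symm, ← _root_.map_mul,
          ← _root_.map_mul, show (1/(2*S))*2*S = 1 from by field_simp, MvPolynomial.C_1]
      have hβ2 : (C (1/(2*S)) : P) * 2 = C (1/S) := by
        rw [show ((2:P)) = C (2:ℝ) from (map_ofNat C 2).symm, ← _root_.map_mul]
        congr 1
        field_simp
      linear_combination (q * q) * hβ2 - f * hβγ
    rw [key]
    refine IsSumSq.real_smul (by positivity) ?_
    exact isSumSq_finset_sum _ _ fun i _ => isSumSq_sum_sq _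

end Main
section StepD

variable {n : ℕ}

set_option synthInstance.maxHeartbeats 1000000 in
lemma exists_linIndep_rep {ι : Type*} [Fintype ι] (f : MvPolynomial (Fin n) ℝ)
    (p : ι → MvPolynomial (Fin n) ℝ) (hrep : f = ∑ i, p i ^ 2) :
    ∃ (k : ℕ) (qf : Fin k → MvPolynomial (Fin n) ℝ), f = ∑ j, qf j ^ 2 ∧
      LinearIndependent ℝ qf ∧
      Submodule.span ℝ (Set.range qf) = Submodule.span ℝ (Set.range p) := by
  classical
  set V := Submodule.span ℝ (Set.range p) with hV
  haveI : FiniteDimensional ℝ V := FiniteDimensional.span_of_finite ℝ (Set.finite_range p)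
  set k := Module.finrank ℝ V with hk
  let b : Module.Basis (Fin k) ℝ V := Module.finBasis ℝ V
  set e : Fin k → MvPolynomial (Fin n) ℝ := fun j => (b j : MvPolynomial (Fin n) ℝ) with he
  have hemem : ∀ j, e j ∈ V := fun j => (b j).2
  set Pv : ι → V := fun i => ⟨p i, Submodule.subset_span ⟨i, rfl⟩⟩ with hPv
  set A : Matrix ι (Fin k) ℝ := Matrix.of fun i j => b.equivFun (Pv i) j with hA
  have hpA : ∀ i, p i = ∑ j, A i j • e j := by
    intro i
    have h1 := b.sum_equivFun (Pv i)
    rw [show p i = ((Pv i : V) : MvPolynomial (Fin n) ℝ) from rfl, ← h1]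
    push_cast
    rfl
  set G := Aᵀ * A with hG
  have hfG : f = ∑ j, ∑ l, G j l • (e j * e l) := by
    rw [hrep, Finset.sum_congr rfl fun i (_ : i ∈ Finset.univ) => by rw [hpA i]]
    exact gram_expand A e
  -- rows of A span everything
  have hspanPv : Submodule.span ℝ (Set.range Pv) = ⊤ := by
    apply Submodule.map_injective_of_injective V.injective_subtype
    rw [Submodule.map_span, Submodule.map_top, Submodule.range_subtype, ← Set.range_comp]
    rfl
  have hrows : Submodule.span ℝ (Set.range fun i => (A i : Fin k → ℝ)) = ⊤ := by
    have h1 : (fun i => (A i : Fin k → ℝ)) = (b.equivFun : V →ₗ[ℝ] (Fin k → ℝ)) ∘ Pv := rfl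
    rw [h1, Set.range_comp, ← Submodule.map_span, hspanPv, Submodule.map_top,
      LinearMap.range_eq_top]
    exact b.equivFun.surjective
  have hInj : ∀ x : Fin k → ℝ, A *ᵥ x = 0 → x = 0 := by
    intro x hx
    have hzero : ∀ v ∈ Submodule.span ℝ (Set.range fun i => (A i : Fin k → ℝ)),
        ∑ j, v j * x j = 0 := by
      intro v hv
      induction hv using Submodule.span_induction with
      | mem v hv =>
        obtain ⟨i, rfl⟩ := hv
        have := congrFun hx i
        simpa [Matrix.mulVec, dotProduct] using this
      | zero => simp
      | add u v hu hv ihu ihv => simp [add_mul, Finset.sum_add_distrib, ihu, ihv]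
      | smul c v hv ihv =>
        simp only [Pi.smul_apply, smul_eq_mul, mul_assoc, ← Finset.mul_sum, ihv, mul_zero]
    have hx0 : ∑ j, x j * x j = 0 := hzero x (hrows ▸ Submodule.mem_top)
    funext j
    exact mul_self_eq_zero.mp
      ((Finset.sum_eq_zero_iff_of_nonneg (fun l _ => mul_self_nonneg _)).mp hx0 j
        (Finset.mem_univ j))
  have hGpsd : G.PosSemidef := by
    rw [hG, ← Matrix.conjTranspose_eq_transpose_of_trivial]
    exact Matrix.posSemidef_conjTranspose_mul_self A
  have hGpd : G.PosDef := by
    refine Matrix.PosDef.of_dotProduct_mulVec_pos hGpsd.1 fun x hxne => ?_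
    have h1 : dotProduct (star x) (G *ᵥ x)
        = dotProduct (A *ᵥ x) (A *ᵥ x) := by
      rw [star_trivial, hG, ← Matrix.mulVec_mulVec, Matrix.dotProduct_mulVec,
        Matrix.vecMul_transpose]
    rw [h1]
    have h2 : A *ᵥ x ≠ 0 := fun hc => hxne (hInj x hc)
    have h3 : ∃ i, (A *ᵥ x) i ≠ 0 := by
      by_contra hcon
      push_neg at hcon
      exact h2 (funext hcon)
    obtain ⟨i, hi⟩ := h3
    have : (0:ℝ) < ∑ i, (A *ᵥ x) i * (A *ᵥ x) i := by
      apply Finset.sum_pos' (fun j _ => mul_self_nonneg _)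
      exact ⟨i, Finset.mem_univ i, mul_self_pos.mpr hi⟩
    simpa [dotProduct] using this
  have hGdet : G.det ≠ 0 := ne_of_gt hGpd.det_pos
  obtain ⟨B, hB⟩ : ∃ B : Matrix (Fin k) (Fin k) ℝ, G = Bᴴ * B := by
    open MatrixOrder in
    obtain ⟨B, hB⟩ := CStarAlgebra.nonneg_iff_eq_star_mul_self.mp hGpsd.nonneg
    exact ⟨B, by rw [hB, Matrix.star_eq_conjTranspose]⟩
  have hB' : G = Bᵀ * B := by rwa [Matrix.conjTranspose_eq_transpose_of_trivial] at hB
  have hBdet : B.det ≠ 0 := by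
    intro h
    apply hGdet
    rw [hB', Matrix.det_mul, Matrix.det_transpose, h, mul_zero]
  have hBunit : IsUnit B.det := isUnit_iff_ne_zero.mpr hBdet
  set qf : Fin k → MvPolynomial (Fin n) ℝ := fun j => ∑ l, B j l • e l with hqf
  refine ⟨k, qf, ?_, ?_, ?_⟩
  · rw [hfG, hB']
    exact (gram_expand B e).symm
  · -- linear independence
    have heLI : LinearIndependent ℝ e := by
      have := b.linearIndependent.map' V.subtype V.ker_subtype
      exact this
    rw [Fintype.linearIndependent_iff]
    intro d hd
    have h1 : ∑ l, (∑ j, d j * B j l) • e l = 0 := by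
      rw [← hd, hqf]
      simp only [Finset.smul_sum, smul_smul]
      rw [Finset.sum_comm]
      exact Finset.sum_congr rfl fun l _ => Finset.sum_smul
    have h2 := Fintype.linearIndependent_iff.mp heLI _ h1
    have h3 : Bᵀ *ᵥ d = 0 := by
      funext l
      simpa [Matrix.mulVec, dotProduct, mul_comm] using h2 l
    have hinj : Function.Injective (Bᵀ).mulVec := by
      rw [Matrix.mulVec_injective_iff_isUnit]
      rw [Matrix.isUnit_iff_isUnit_det, Matrix.det_transpose]
      exact hBunit
    have h4 : d = 0 := hinj (by rw [h3, Matrix.mulVec_zero])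
    exact fun j => congrFun h4 j
  · -- span
    have hqfV : ∀ j, qf j ∈ V :=
      fun j => Submodule.sum_mem _ fun l _ => Submodule.smul_mem _ _ (hemem l)
    have heSpan : ∀ l, e l ∈ Submodule.span ℝ (Set.range qf) := by
      intro l
      have hBB : B⁻¹ * B = 1 := Matrix.nonsing_inv_mul B hBunit
      have hel : e l = ∑ j, (B⁻¹ l j) • qf j := by
        rw [hqf]
        simp only [Finset.smul_sum, smul_smul]
        rw [Finset.sum_comm]
        have : ∀ l', ∑ j, (B⁻¹ l j * B j l') • e l' = ((B⁻¹ * B) l l') • e l' := by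
          intro l'
          rw [Matrix.mul_apply, Finset.sum_smul]
        rw [Finset.sum_congr rfl fun l' _ => this l']
        rw [hBB]
        simp [Matrix.one_apply]
      rw [hel]
      exact Submodule.sum_mem _ fun j _ => Submodule.smul_mem _ _
        (Submodule.subset_span ⟨j, rfl⟩)
    apply le_antisymm
    · rw [Submodule.span_le]
      rintro _ ⟨j, rfl⟩
      exact hqfV j
    · rw [hV, Submodule.span_le]
      rintro _ ⟨i, rfl⟩
      rw [SetLike.mem_coe, hpA i]
      exact Submodule.sum_mem _ fun j _ => Submodule.smul_mem _ _ (heSpan j)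

end StepD
theorem stmt_15 (n : ℕ) (f : MvPolynomial (Fin n) ℝ) (hf : IsSumSq f) :
    ∃ (r : ℕ) (p : Fin r → MvPolynomial (Fin n) ℝ),
      f = ∑ i, (p i) ^ 2 ∧ LinearIndependent ℝ p ∧
      (Submodule.span ℝ (Set.range p) : Set (MvPolynomial (Fin n) ℝ))
        = {q | ∃ ε : ℝ, 0 < ε ∧ IsSumSq (f - ε • q ^ 2)} := by
  classical
  set Pk : ℕ → Prop := fun k => ∃ (ι : Type) (_ : Fintype ι) (p : ι → MvPolynomial (Fin n) ℝ),
    f = ∑ i, p i ^ 2 ∧ Module.finrank ℝ (Submodule.span ℝ (Set.range p)) = k with hPk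
  set N := Module.finrank ℝ (restrictTotalDegree (Fin n) ℝ f.totalDegree) with hN
  have hbound : ∀ (ι : Type) (_ : Fintype ι) (p : ι → MvPolynomial (Fin n) ℝ),
      f = ∑ i, p i ^ 2 → Module.finrank ℝ (Submodule.span ℝ (Set.range p)) ≤ N := by
    intro ι _ p hp
    have hsub : Submodule.span ℝ (Set.range p) ≤ restrictTotalDegree (Fin n) ℝ f.totalDegree := by
      rw [Submodule.span_le]
      rintro _ ⟨i, rfl⟩
      rw [SetLike.mem_coe, mem_restrictTotalDegree]
      have := totalDegree_rep_le p i
      rwa [← hp] at this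
    exact Submodule.finrank_mono hsub
  obtain ⟨m₁, q₁, hq₁⟩ := sos_exists_fin_rep hf
  have hq₁' : f = ∑ i, q₁ i ^ 2 := by
    rw [hq₁]; exact Finset.sum_congr rfl fun i _ => (sq _).symm
  have hPk1 : Pk (Module.finrank ℝ (Submodule.span ℝ (Set.range q₁))) :=
    ⟨Fin m₁, inferInstance, q₁, hq₁', rfl⟩
  set k₀ := Nat.findGreatest Pk N with hk₀
  have hPkk₀ : Pk k₀ := Nat.findGreatest_spec (hbound _ _ _ hq₁') hPk1
  obtain ⟨ι, hι, p, hrep₀, hrank⟩ := hPkk₀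
  letI := hι
  have hrep : f = ∑ i, p i ^ 2 := hrep₀
  clear hrep₀
  set V := Submodule.span ℝ (Set.range p) with hV
  haveI : FiniteDimensional ℝ V := FiniteDimensional.span_of_finite ℝ (Set.finite_range p)
  have hmax : ∀ (κ : Type) (_ : Fintype κ) (t : κ → MvPolynomial (Fin n) ℝ),
      f = ∑ i, t i ^ 2 → Module.finrank ℝ (Submodule.span ℝ (Set.range t)) ≤ k₀ := by
    intro κ hκ t ht
    exact Nat.le_findGreatest (hbound _ _ _ ht) ⟨κ, hκ, t, ht, rfl⟩
  -- Claim 2 : U_f ⊆ V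
  have hsub2 : ∀ (q : MvPolynomial (Fin n) ℝ) (ε : ℝ), 0 < ε →
      IsSumSq (f - ε • q ^ 2) → q ∈ V := by
    intro q ε hε hsos
    obtain ⟨m₂, s, hs⟩ := sos_exists_fin_rep hsos
    have hs' : f - ε • q ^ 2 = ∑ j, s j ^ 2 := by
      rw [hs]; exact Finset.sum_congr rfl fun i _ => (sq _).symm
    set a : ℝ := Real.sqrt (1/2) with hadef
    set bb : ℝ := Real.sqrt (ε/2) with hbdef
    have ha2 : a ^ 2 = 1/2 := Real.sq_sqrt (by norm_num)
    have hb2 : bb ^ 2 = ε/2 := Real.sq_sqrt (by positivity)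
    have ha0 : a ≠ 0 := by
      rw [hadef]
      positivity
    have hb0 : bb ≠ 0 := by
      rw [hbdef]
      positivity
    set t : ι ⊕ (Fin m₂ ⊕ Fin 1) → MvPolynomial (Fin n) ℝ :=
      Sum.elim (fun i => a • p i) (Sum.elim (fun j => a • s j) (fun _ => bb • q)) with htdef
    have ht : f = ∑ x, t x ^ 2 := by
      rw [Fintype.sum_sum_type, Fintype.sum_sum_type]
      simp only [htdef, Sum.elim_inl, Sum.elim_inr, smul_pow]
      rw [← Finset.smul_sum, ← Finset.smul_sum, ← hrep, ← hs', ha2, hb2]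
      rw [Finset.sum_const, Finset.card_univ, Fintype.card_fin, one_nsmul]
      module
    have hWrank := hmax _ inferInstance t ht
    set W := Submodule.span ℝ (Set.range t) with hW
    haveI : FiniteDimensional ℝ W := FiniteDimensional.span_of_finite ℝ (Set.finite_range t)
    have hVW : V ≤ W := by
      rw [hV, Submodule.span_le]
      rintro _ ⟨i, rfl⟩
      have h1 : a • p i ∈ W := Submodule.subset_span ⟨Sum.inl i, rfl⟩
      have h2 := Submodule.smul_mem W a⁻¹ h1
      rwa [smul_smul, inv_mul_cancel₀ ha0, one_smul] at h2
    have hVW' : V = W :=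
      Submodule.eq_of_le_of_finrank_le hVW (le_trans hWrank (le_of_eq hrank.symm))
    have hbq : bb • q ∈ W := Submodule.subset_span ⟨Sum.inr (Sum.inr 0), rfl⟩
    rw [← hVW'] at hbq
    have h2 := Submodule.smul_mem V bb⁻¹ hbq
    rwa [smul_smul, inv_mul_cancel₀ hb0, one_smul] at h2
  -- Step D
  obtain ⟨k, qf, hfq, hli, hspan⟩ := exists_linIndep_rep f p hrep
  refine ⟨k, qf, hfq, hli, ?_⟩
  rw [hspan, ← hV]
  ext q
  simp only [SetLike.mem_coe, Set.mem_setOf_eq]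
  constructor
  · intro hq
    exact span_sub_Uf hf p hrep (hV ▸ hq)
  · rintro ⟨ε, hε, hsos⟩
    exact hsub2 q ε hε hsos
end

section
/- Let f(x,y) = y^2 + x^{2r} with r ≥ 1, and let p(x,y) be a real analytic function germ at the origin of ℝ^2. Then p^2/f is locally bounded near 0 in ℝ^2 if and only if the vanishing order of p(x,0) at x = 0 is at least r. -/
open Filter Function Topology FormalMultilinearSeries

/-- If the first `n` coefficients of the power series of `f` at `z₀` vanish, then
`f z = (z - z₀) ^ n • ((swap dslope z₀)^[n] f) z` near `z₀`. -/
lemma aux_factor {f : ℝ → ℝ} {p : FormalMultilinearSeries ℝ ℝ ℝ} {z₀ : ℝ}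
    (hp : HasFPowerSeriesAt f p z₀) (n : ℕ) (h : ∀ k < n, p.coeff k = 0) :
    ∀ᶠ z in 𝓝 z₀, f z = (z - z₀) ^ n • (Function.swap dslope z₀)^[n] f z := by
  have hq := hasFPowerSeriesAt_iff'.mp (hp.has_fpower_series_iterate_dslope_fslope n)
  filter_upwards [hq, hasFPowerSeriesAt_iff'.mp hp] with x hx1 hx2
  obtain ⟨s, hs1, hs2⟩ := HasSum.exists_hasSum_smul_of_apply_eq_zero hx2 h
  convert hs1.symm
  simp only [coeff_iterate_fslope] at hx1
  exact hx1.unique hs2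

lemma aux_ideriv {g : ℝ → ℝ} {q : FormalMultilinearSeries ℝ ℝ ℝ}
    (hq : HasFPowerSeriesAt g q 0) (n : ℕ) :
    iteratedDeriv n g 0 = (n.factorial : ℝ) * q.coeff n := by
  obtain ⟨R, hR⟩ := hq
  have h := hR.factorial_smul (y := (1 : ℝ)) n
  rw [iteratedDeriv_eq_iteratedFDeriv, ← h]
  simp [nsmul_eq_mul]

theorem stmt_17 (r : ℕ) (hr : 1 ≤ r) (p : ℝ × ℝ → ℝ)
    (hp : AnalyticAt ℝ p (0, 0)) :
    (∃ U ∈ nhds ((0, 0) : ℝ × ℝ), ∃ C : ℝ, 0 < C ∧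
        ∀ z ∈ U, (p z) ^ 2 ≤ C * ((z.2) ^ 2 + z.1 ^ (2 * r)))
      ↔ ∀ j < r, iteratedDeriv j (fun x : ℝ => p (x, 0)) 0 = 0 := by
  set g : ℝ → ℝ := fun x : ℝ => p (x, 0) with hgdef
  have hg : AnalyticAt ℝ g 0 := by
    have h1 : AnalyticAt ℝ (fun x : ℝ => ((x, 0) : ℝ × ℝ)) 0 :=
      (analyticAt_id).prod analyticAt_const
    have h2 := AnalyticAt.comp (f := fun x : ℝ => ((x, 0) : ℝ × ℝ)) hp h1
    exact h2
  obtain ⟨q, hq⟩ := hg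
  have hcoeff : ∀ j : ℕ, (iteratedDeriv j g 0 = 0 ↔ q.coeff j = 0) := by
    intro j
    rw [aux_ideriv hq j]
    constructor
    · intro h
      rcases mul_eq_zero.mp h with h | h
      · exact absurd h (Nat.cast_ne_zero.mpr (Nat.factorial_ne_zero j))
      · exact h
    · intro h; rw [h, mul_zero]
  constructor
  · rintro ⟨U, hU, C, hC, hb⟩
    have htend : Tendsto (fun x : ℝ => ((x, 0) : ℝ × ℝ)) (𝓝 0) (𝓝 (0, 0)) :=
      (continuous_id.prodMk continuous_const).tendsto' 0 (0, 0) rfl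
    have hUx : ∀ᶠ x in 𝓝 (0 : ℝ), g x ^ 2 ≤ C * x ^ (2 * r) := by
      filter_upwards [htend hU] with x hx
      simpa using hb _ hx
    intro j
    induction j using Nat.strong_induction_on with
    | _ j IH =>
      intro hj
      rw [hcoeff j]
      have hk : ∀ k < j, q.coeff k = 0 := fun k hkj =>
        (hcoeff k).mp (IH k hkj (hkj.trans hj))
      have hfac := aux_factor hq j hk
      set h : ℝ → ℝ := (Function.swap dslope 0)^[j] g with hhdef
      have hh : AnalyticAt ℝ h 0 := ⟨_, hq.has_fpower_series_iterate_dslope_fslope j⟩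
      have hh0 : h 0 = q.coeff j := by
        have h1 := (hq.has_fpower_series_iterate_dslope_fslope j).coeff_zero (fun _ => 1)
        have h2 : (fslope^[j] q).coeff 0 = q.coeff j := by
          simpa using coeff_iterate_fslope (p := q) j 0
        rw [← h2]
        exact h1.symm
      rw [← hh0]
      have hbnd : ∀ᶠ x in 𝓝[≠] (0 : ℝ), h x ^ 2 ≤ C * x ^ (2 * (r - j)) := by
        filter_upwards [hfac.filter_mono nhdsWithin_le_nhds,
          hUx.filter_mono nhdsWithin_le_nhds, self_mem_nhdsWithin] with x hx1 hx2 hx3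
        have hx0 : x ≠ 0 := hx3
        have hxpos : (0 : ℝ) < x ^ (2 * j) := by
          have hsq : x ^ (2 * j) = (x ^ j) ^ 2 := by rw [mul_comm, pow_mul]
          rw [hsq]
          exact lt_of_le_of_ne (sq_nonneg _) (Ne.symm (pow_ne_zero 2 (pow_ne_zero j hx0)))
        have hgx : g x ^ 2 = x ^ (2 * j) * h x ^ 2 := by
          rw [hx1, smul_eq_mul, sub_zero, mul_pow, ← pow_mul, mul_comm j 2]
        have key : x ^ (2 * j) * h x ^ 2 ≤ (C * x ^ (2 * (r - j))) * x ^ (2 * j) := by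
          have hex : 2 * r = 2 * (r - j) + 2 * j := by omega
          calc x ^ (2 * j) * h x ^ 2 = g x ^ 2 := hgx.symm
            _ ≤ C * x ^ (2 * r) := hx2
            _ = (C * x ^ (2 * (r - j))) * x ^ (2 * j) := by rw [hex, pow_add]; ring
        exact le_of_mul_le_mul_right (by nlinarith [key]) hxpos
      have hlim1 : Tendsto (fun x : ℝ => h x ^ 2) (𝓝[≠] 0) (𝓝 (h 0 ^ 2)) :=
        ((hh.continuousAt.pow 2).tendsto).mono_left nhdsWithin_le_nhds
      have hlim2 : Tendsto (fun x : ℝ => C * x ^ (2 * (r - j))) (𝓝[≠] 0) (𝓝 0) := by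
        have hl : Tendsto (fun x : ℝ => C * x ^ (2 * (r - j))) (𝓝 0)
            (𝓝 (C * (0 : ℝ) ^ (2 * (r - j)))) :=
          (continuous_const.mul (continuous_pow _)).tendsto 0
        have hne : 2 * (r - j) ≠ 0 := by omega
        rw [zero_pow hne, mul_zero] at hl
        exact hl.mono_left nhdsWithin_le_nhds
      have hle : h 0 ^ 2 ≤ 0 := le_of_tendsto_of_tendsto hlim1 hlim2 hbnd
      have hz : h 0 ^ 2 = 0 := le_antisymm hle (sq_nonneg _)
      exact (pow_eq_zero_iff two_ne_zero).mp hz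
  · intro hvan
    have hk : ∀ k < r, q.coeff k = 0 := fun k hkr => (hcoeff k).mp (hvan k hkr)
    have hfac := aux_factor hq r hk
    set h : ℝ → ℝ := (Function.swap dslope 0)^[r] g with hhdef
    have hh : AnalyticAt ℝ h 0 := ⟨_, hq.has_fpower_series_iterate_dslope_fslope r⟩
    set M : ℝ := |h 0| + 1 with hM
    have hMbnd : ∀ᶠ x in 𝓝 (0 : ℝ), |h x| ≤ M := by
      have ht2 : Tendsto (fun x => |h x|) (𝓝 0) (𝓝 |h 0|) := (hh.continuousAt.abs).tendsto
      filter_upwards [ht2.eventually_lt_const (lt_add_one |h 0|)] with x hx using hx.le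
    have hcd : ContDiffAt ℝ 1 p (0, 0) := hp.contDiffAt
    obtain ⟨K, t, ht, hlip⟩ := hcd.exists_lipschitzOnWith
    obtain ⟨ε1, hε1, hball1⟩ := Metric.mem_nhds_iff.mp ht
    obtain ⟨ε2, hε2, hball2⟩ := Metric.mem_nhds_iff.mp (hfac.and hMbnd)
    set ε := min ε1 ε2 with hε
    have hεpos : 0 < ε := lt_min hε1 hε2
    refine ⟨Metric.ball ((0, 0) : ℝ × ℝ) ε, Metric.ball_mem_nhds _ hεpos,
      2 * (K : ℝ) ^ 2 + 2 * M ^ 2 + 1, by positivity, ?_⟩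
    rintro ⟨x, y⟩ hz
    have hd : dist ((x, y) : ℝ × ℝ) (0, 0) < ε := Metric.mem_ball.mp hz
    rw [Prod.dist_eq] at hd
    simp only [Real.dist_eq, sub_zero] at hd
    have hx : |x| < ε := lt_of_le_of_lt (le_max_left _ _) hd
    have hy : |y| < ε := lt_of_le_of_lt (le_max_right _ _) hd
    have hxball : x ∈ Metric.ball (0 : ℝ) ε2 := by
      rw [Metric.mem_ball, Real.dist_eq, sub_zero]
      exact lt_of_lt_of_le hx (min_le_right _ _)
    obtain ⟨hgx, hhx⟩ := hball2 hxball
    have hzt : ((x, y) : ℝ × ℝ) ∈ t := by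
      apply hball1
      rw [Metric.mem_ball, Prod.dist_eq]
      simp only [Real.dist_eq, sub_zero]
      exact lt_of_lt_of_le (max_lt hx hy) (min_le_left _ _)
    have hx0t : ((x, 0) : ℝ × ℝ) ∈ t := by
      apply hball1
      rw [Metric.mem_ball, Prod.dist_eq]
      simp only [Real.dist_eq, sub_zero, abs_zero]
      exact lt_of_lt_of_le (max_lt hx hεpos) (min_le_left _ _)
    have hdist : dist (p (x, y)) (p (x, 0)) ≤ (K : ℝ) * |y| := by
      have hl2 := hlip.dist_le_mul _ hzt _ hx0t
      simp only [Prod.dist_eq, Real.dist_eq, sub_self, abs_zero, sub_zero] at hl2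
      rwa [max_eq_right (abs_nonneg y)] at hl2
    rw [Real.dist_eq] at hdist
    have h1 : (p (x, y) - g x) ^ 2 ≤ (K : ℝ) ^ 2 * y ^ 2 := by
      nlinarith [abs_nonneg y, sq_abs (p (x, y) - g x), sq_abs y, K.coe_nonneg,
        abs_nonneg (p (x, y) - g x)]
    have h2 : g x ^ 2 ≤ M ^ 2 * x ^ (2 * r) := by
      have he : g x ^ 2 = (x ^ r) ^ 2 * h x ^ 2 := by
        rw [hgx, smul_eq_mul, sub_zero]; ring
      have habs : h x ^ 2 ≤ M ^ 2 := by nlinarith [sq_abs (h x), abs_nonneg (h x)]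
      have hnn : (0 : ℝ) ≤ x ^ (2 * r) := by rw [mul_comm, pow_mul]; positivity
      rw [he, ← pow_mul, mul_comm r 2]
      nlinarith [habs, hnn, sq_nonneg (h x)]
    have hxpow : (0 : ℝ) ≤ x ^ (2 * r) := by rw [mul_comm, pow_mul]; positivity
    simp only
    nlinarith [h1, h2, hxpow, sq_nonneg y, sq_nonneg (p (x, y) - 2 * g x),
      K.coe_nonneg, sq_nonneg (M : ℝ), sq_nonneg (K : ℝ)]
end
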